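/- Theorem (biorthogonal introduces no new values): if Φ ⊆ Λ_v is a set of values closed under (≡) (i.e. whenever v ∈ Φ, w is a value and v ≡ w, then w ∈ Φ), then Φ^⊥⊥ ∩ Λ_v = Φ. -/

import Mathlib

namespace CBV

/-! ## Syntax: values, terms, stacks, processes of the call-by-value λμ-calculus.
    λ-variables, μ-variables, term variables, labels and constructors are all
    represented by natural numbers. -/

mutual
  /-- Values: `x`, `λx.t`, `C[v]`, `{lᵢ = vᵢ}`. -/
  inductive Val : Type where
    | var : ℕ → Val                      -- λ-variable x
    | lam : ℕ → Trm → Val                -- λx.t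
    | cns : ℕ → Val → Val                -- C[v]
    | rcd : Flds → Val                   -- {lᵢ = vᵢ}
  /-- Record fields: a finite list of (label, value) pairs. -/
  inductive Flds : Type where
    | nil : Flds
    | cons : ℕ → Val → Flds → Flds
  /-- Terms: `a`, `v`, `t u`, `μα.t`, `p`, `v.l`, `case_v [Cᵢ[xᵢ] → tᵢ]`, `δ_{v,w}`. -/
  inductive Trm : Type where
    | tvar : ℕ → Trm                     -- term variable a
    | val : Val → Trm
    | app : Trm → Trm → Trm
    | mu : ℕ → Trm → Trm                 -- μα.t
    | prc : Proc → Trm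
    | prj : Val → ℕ → Trm                -- v.l
    | cse : Val → Brs → Trm              -- case_v [...]
    | dlt : Val → Val → Trm              -- δ_{v,w}
  /-- Case branches: a finite list of (constructor, bound λ-variable, body). -/
  inductive Brs : Type where
    | nil : Brs
    | cons : ℕ → ℕ → Trm → Brs → Brs
  /-- Stacks: `α`, `v.π`, `[t]π`. -/
  inductive Stk : Type where
    | svar : ℕ → Stk                     -- stack (μ-)variable α
    | push : Val → Stk → Stk             -- v.π
    | frame : Trm → Stk → Stk            -- [t]π
  /-- Processes: `t ∗ π`. -/
  inductive Proc : Type where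
    | mk : Trm → Stk → Proc
end

/-- Lookup of a label in a record. -/
def Flds.lookup : Flds → ℕ → Option Val
  | .nil, _ => none
  | .cons l v fs, k => if l = k then some v else fs.lookup k

/-- Lookup of a constructor among case branches, returning the bound variable and body. -/
def Brs.lookup : Brs → ℕ → Option (ℕ × Trm)
  | .nil, _ => none
  | .cons c x t bs, k => if c = k then some (x, t) else bs.lookup k

/-- A substitution maps λ-variables to values, μ-variables to stacks and
    term variables to terms (totally; the identity outside its support). -/
structure Subst : Type where
  lamS : ℕ → Val
  muS  : ℕ → Stk
  trmS : ℕ → Trm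

/-- The identity substitution. -/
def Subst.id : Subst := ⟨Val.var, Stk.svar, Trm.tvar⟩

/-- The substitution [x := v] of a single λ-variable. -/
def subst1Lam (x : ℕ) (v : Val) : Subst :=
  { Subst.id with lamS := Function.update Val.var x v }

/-- The substitution [α := π] of a single μ-variable. -/
def subst1Mu (α : ℕ) (π : Stk) : Subst :=
  { Subst.id with muS := Function.update Stk.svar α π }

/-- The substitution [a := t] of a single term variable. -/
def subst1Trm (a : ℕ) (t : Trm) : Subst :=
  { Subst.id with trmS := Function.update Trm.tvar a t }

/-- Remove a λ-variable from the support of a substitution (used under binders). -/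
def Subst.skipLam (σ : Subst) (x : ℕ) : Subst :=
  { σ with lamS := Function.update σ.lamS x (Val.var x) }

/-- Remove a μ-variable from the support of a substitution (used under binders). -/
def Subst.skipMu (σ : Subst) (α : ℕ) : Subst :=
  { σ with muS := Function.update σ.muS α (Stk.svar α) }

mutual
  /-- Application of a substitution to a value. -/
  def substVal (σ : Subst) : Val → Val
    | .var x => σ.lamS x
    | .lam x t => .lam x (substTrm (σ.skipLam x) t)
    | .cns c v => .cns c (substVal σ v)
    | .rcd fs => .rcd (substFlds σ fs)
  /-- Application of a substitution to record fields. -/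
  def substFlds (σ : Subst) : Flds → Flds
    | .nil => .nil
    | .cons l v fs => .cons l (substVal σ v) (substFlds σ fs)
  /-- Application of a substitution to a term. -/
  def substTrm (σ : Subst) : Trm → Trm
    | .tvar a => σ.trmS a
    | .val v => .val (substVal σ v)
    | .app t u => .app (substTrm σ t) (substTrm σ u)
    | .mu α t => .mu α (substTrm (σ.skipMu α) t)
    | .prc p => .prc (substPrc σ p)
    | .prj v l => .prj (substVal σ v) l
    | .cse v bs => .cse (substVal σ v) (substBrs σ bs)
    | .dlt v w => .dlt (substVal σ v) (substVal σ w)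
  /-- Application of a substitution to case branches. -/
  def substBrs (σ : Subst) : Brs → Brs
    | .nil => .nil
    | .cons c x t bs => .cons c x (substTrm (σ.skipLam x) t) (substBrs σ bs)
  /-- Application of a substitution to a stack. -/
  def substStk (σ : Subst) : Stk → Stk
    | .svar α => σ.muS α
    | .push v π => .push (substVal σ v) (substStk σ π)
    | .frame t π => .frame (substTrm σ t) (substStk σ π)
  /-- Application of a substitution to a process. -/
  def substPrc (σ : Subst) : Proc → Proc
    | .mk t π => .mk (substTrm σ t) (substStk σ π)
end

/-! ## The reduction relation (≻). -/

/-- The reduction relation (≻) of the Krivine abstract machine. -/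
inductive Red : Proc → Proc → Prop where
  | app (t u : Trm) (π : Stk) :
      Red (.mk (.app t u) π) (.mk u (.frame t π))
  | frame (v : Val) (t : Trm) (π : Stk) :
      Red (.mk (.val v) (.frame t π)) (.mk t (.push v π))
  | beta (x : ℕ) (t : Trm) (v : Val) (π : Stk) :
      Red (.mk (.val (.lam x t)) (.push v π)) (.mk (substTrm (subst1Lam x v) t) π)
  | mu (α : ℕ) (t : Trm) (π : Stk) :
      Red (.mk (.mu α t) π) (.mk (substTrm (subst1Mu α π) t) π)
  | prc (p : Proc) (π : Stk) :
      Red (.mk (.prc p) π) p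
  | prj (fs : Flds) (l : ℕ) (v : Val) (π : Stk) :
      fs.lookup l = some v →
      Red (.mk (.prj (.rcd fs) l) π) (.mk (.val v) π)
  | cse (c : ℕ) (v : Val) (bs : Brs) (x : ℕ) (t : Trm) (π : Stk) :
      bs.lookup c = some (x, t) →
      Red (.mk (.cse (.cns c v) bs) π) (.mk (substTrm (subst1Lam x v) t) π)

/-- k-fold application of a relation. -/
def iterRel (R : Proc → Proc → Prop) : ℕ → Proc → Proc → Prop
  | 0 => Eq
  | k + 1 => fun p r => ∃ q, R p q ∧ iterRel R k q r

/-- A process is final if it is of the form `v ∗ α`. -/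
def Final (p : Proc) : Prop :=
  ∃ (v : Val) (α : ℕ), p = .mk (.val v) (.svar α)

/-- A process is δ-like if it is of the form `δ_{v,w} ∗ π`. -/
def DeltaLike (p : Proc) : Prop :=
  ∃ (v w : Val) (π : Stk), p = .mk (.dlt v w) π

/-- A process is blocked if it has no (≻)-reduct. -/
def Blocked (p : Proc) : Prop := ¬ ∃ q, Red p q

/-- A process is stuck if it is neither final nor δ-like, and all its
    substitution instances are blocked. -/
def Stuck (p : Proc) : Prop :=
  ¬ Final p ∧ ¬ DeltaLike p ∧ ∀ σ : Subst, Blocked (substPrc σ p)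

/-- A process is non-terminating if it reaches no blocked process. -/
def NonTerminating (p : Proc) : Prop :=
  ¬ ∃ q, Relation.ReflTransGen Red p q ∧ Blocked q

/-- `p ⇓_R`: the process `p` converges for the reduction relation `R`,
    i.e. it `R`-reduces to a final process. -/
def ConvergesIn (R : Proc → Proc → Prop) (p : Proc) : Prop :=
  ∃ q, Relation.ReflTransGen R p q ∧ Final q

/-- The indexed reduction relation (↪ᵢ) = (≻) ∪ {(δ_{v,w} ∗ π, v ∗ π) | ∃ j < i, v ≢ⱼ w}.
    (The condition `v ≢ⱼ w` is inlined; it coincides with `¬ EquivI j v w` below.) -/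
def RedI : ℕ → Proc → Proc → Prop
  | i => fun p q =>
      Red p q ∨
      ∃ (v w : Val) (π : Stk), p = .mk (.dlt v w) π ∧ q = .mk (.val v) π ∧
        ∃ j, ∃ _ : j < i,
          ¬ (∀ k, ∀ _ : k ≤ j, ∀ (π' : Stk) (σ : Subst),
              ConvergesIn (RedI k) (.mk (substTrm σ (.val v)) π') ↔
              ConvergesIn (RedI k) (.mk (substTrm σ (.val w)) π'))
  termination_by i => i
  decreasing_by omega

/-- The indexed observational equivalence (≡ᵢ). -/
def EquivI (i : ℕ) (t u : Trm) : Prop :=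
  ∀ j, j ≤ i → ∀ (π : Stk) (σ : Subst),
    ConvergesIn (RedI j) (.mk (substTrm σ t) π) ↔
    ConvergesIn (RedI j) (.mk (substTrm σ u) π)

/-- The reduction relation (↪) = ∪ᵢ (↪ᵢ). -/
def RedFull (p q : Proc) : Prop := ∃ i, RedI i p q

/-- Observational equivalence (≡) = ∩ᵢ (≡ᵢ). -/
def Equiv (t u : Trm) : Prop := ∀ i, EquivI i t u

/-! ## The pole and orthogonality. -/

/-- The pole ⫫ = {p | p ⇓_↪}. -/
def Pole : Set Proc := {p | ConvergesIn RedFull p}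

/-- Orthogonal of a set of values: φ^⊥ = {π | ∀ v ∈ φ, v ∗ π ∈ ⫫}. -/
def orth (φ : Set Val) : Set Stk :=
  {π | ∀ v ∈ φ, Proc.mk (.val v) π ∈ Pole}

/-- Bi-orthogonal of a set of values: φ^⊥⊥ = {t | ∀ π ∈ φ^⊥, t ∗ π ∈ ⫫}. -/
def biorth (φ : Set Val) : Set Trm :=
  {t | ∀ π ∈ orth φ, Proc.mk t π ∈ Pole}

/-! ## Free variables and closedness. -/

/-- The kinds of variables: λ-variables, μ-variables, term variables,
    predicate variables. -/
inductive VKind : Type where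
  | lam | mu | trm | prd
deriving DecidableEq

mutual
  /-- Free variables (of every kind) of a value. -/
  def fvVal : Val → Set (VKind × ℕ)
    | .var x => {(VKind.lam, x)}
    | .lam x t => fvTrm t \ {(VKind.lam, x)}
    | .cns _ v => fvVal v
    | .rcd fs => fvFlds fs
  /-- Free variables of record fields. -/
  def fvFlds : Flds → Set (VKind × ℕ)
    | .nil => ∅
    | .cons _ v fs => fvVal v ∪ fvFlds fs
  /-- Free variables of a term. -/
  def fvTrm : Trm → Set (VKind × ℕ)
    | .tvar a => {(VKind.trm, a)}
    | .val v => fvVal v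
    | .app t u => fvTrm t ∪ fvTrm u
    | .mu α t => fvTrm t \ {(VKind.mu, α)}
    | .prc p => fvPrc p
    | .prj v _ => fvVal v
    | .cse v bs => fvVal v ∪ fvBrs bs
    | .dlt v w => fvVal v ∪ fvVal w
  /-- Free variables of case branches. -/
  def fvBrs : Brs → Set (VKind × ℕ)
    | .nil => ∅
    | .cons _ x t bs => (fvTrm t \ {(VKind.lam, x)}) ∪ fvBrs bs
  /-- Free variables of a stack. -/
  def fvStk : Stk → Set (VKind × ℕ)
    | .svar α => {(VKind.mu, α)}
    | .push v π => fvVal v ∪ fvStk π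
    | .frame t π => fvTrm t ∪ fvStk π
  /-- Free variables of a process. -/
  def fvPrc : Proc → Set (VKind × ℕ)
    | .mk t π => fvTrm t ∪ fvStk π
end

/-- A term is closed if it contains no free variable of any kind. -/
def ClosedTrm (t : Trm) : Prop := fvTrm t = ∅

end CBV

namespace CBV

/-! A value `v ∉ Φ` is refuted by the stack `[λx. δ_{x,v}] α` with `x` fresh for `v`: a value
`w ∈ Φ` is sent to `δ_{w,v} ∗ α`, which steps to the final `w ∗ α` because `w ≢ v` by closure
of `Φ` under `(≡)`, so the stack lies in `Φ^⊥`; but `v` itself is sent to `δ_{v,v} ∗ α`, which is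
stuck for every `(↪ᵢ)` since `v ≡ᵢ v` always holds. -/

mutual
  def lamBoundVal : Val → ℕ
    | .var x => x
    | .lam x t => max x (lamBoundTrm t)
    | .cns _ v => lamBoundVal v
    | .rcd fs => lamBoundFlds fs
  def lamBoundFlds : Flds → ℕ
    | .nil => 0
    | .cons _ v fs => max (lamBoundVal v) (lamBoundFlds fs)
  def lamBoundTrm : Trm → ℕ
    | .tvar _ => 0
    | .val v => lamBoundVal v
    | .app t u => max (lamBoundTrm t) (lamBoundTrm u)
    | .mu _ t => lamBoundTrm t
    | .prc p => lamBoundPrc p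
    | .prj v _ => lamBoundVal v
    | .cse v bs => max (lamBoundVal v) (lamBoundBrs bs)
    | .dlt v w => max (lamBoundVal v) (lamBoundVal w)
  def lamBoundBrs : Brs → ℕ
    | .nil => 0
    | .cons _ x t bs => max (max x (lamBoundTrm t)) (lamBoundBrs bs)
  def lamBoundStk : Stk → ℕ
    | .svar _ => 0
    | .push v π => max (lamBoundVal v) (lamBoundStk π)
    | .frame t π => max (lamBoundTrm t) (lamBoundStk π)
  def lamBoundPrc : Proc → ℕ
    | .mk t π => max (lamBoundTrm t) (lamBoundStk π)
end

namespace Subst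

def FixesUpTo (σ : Subst) (N : ℕ) : Prop :=
  σ.muS = Stk.svar ∧ σ.trmS = Trm.tvar ∧ ∀ y ≤ N, σ.lamS y = Val.var y

variable {σ : Subst} {N M : ℕ}

theorem FixesUpTo.mono (h : σ.FixesUpTo M) (hNM : N ≤ M) : σ.FixesUpTo N :=
  ⟨h.1, h.2.1, fun y hy => h.2.2 y (hy.trans hNM)⟩

theorem FixesUpTo.skipLam {x : ℕ} (h : σ.FixesUpTo (max x N)) : (σ.skipLam x).FixesUpTo N := by
  refine ⟨h.1, h.2.1, fun y hy => ?_⟩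
  by_cases hyx : y = x
  · simp [Subst.skipLam, hyx]
  · simp [Subst.skipLam, Function.update_of_ne hyx, h.2.2 y (hy.trans (le_max_right _ _))]

theorem FixesUpTo.skipMu (h : σ.FixesUpTo N) (α : ℕ) : (σ.skipMu α).FixesUpTo N :=
  ⟨by simp [Subst.skipMu, h.1], h.2.1, h.2.2⟩

theorem subst1Lam_fixesUpTo {x N : ℕ} (hN : N < x) (v : Val) : (subst1Lam x v).FixesUpTo N :=
  ⟨rfl, rfl, fun y hy => by simp [subst1Lam, Subst.id, Function.update_of_ne (by omega : y ≠ x)]⟩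

end Subst

open Subst

mutual
theorem substVal_eq_self : ∀ (v : Val) {σ : Subst}, σ.FixesUpTo (lamBoundVal v) → substVal σ v = v
  | .var x, σ, h => by simpa [substVal] using h.2.2 x le_rfl
  | .lam x t, σ, h => by
      rw [substVal, substTrm_eq_self t (FixesUpTo.skipLam (by simpa [lamBoundVal] using h))]
  | .cns c v, σ, h => by
      rw [substVal, substVal_eq_self v (by simpa [lamBoundVal] using h)]
  | .rcd fs, σ, h => by
      rw [substVal, substFlds_eq_self fs (by simpa [lamBoundVal] using h)]
theorem substFlds_eq_self : ∀ (fs : Flds) {σ : Subst}, σ.FixesUpTo (lamBoundFlds fs) →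
    substFlds σ fs = fs
  | .nil, σ, _ => rfl
  | .cons l v fs, σ, h => by
      rw [substFlds, substVal_eq_self v (h.mono (by simp [lamBoundFlds])),
        substFlds_eq_self fs (h.mono (by simp [lamBoundFlds]))]
theorem substTrm_eq_self : ∀ (t : Trm) {σ : Subst}, σ.FixesUpTo (lamBoundTrm t) →
    substTrm σ t = t
  | .tvar a, σ, h => by simp [substTrm, h.2.1]
  | .val v, σ, h => by
      rw [substTrm, substVal_eq_self v (by simpa [lamBoundTrm] using h)]
  | .app t u, σ, h => by
      rw [substTrm, substTrm_eq_self t (h.mono (by simp [lamBoundTrm])),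
        substTrm_eq_self u (h.mono (by simp [lamBoundTrm]))]
  | .mu α t, σ, h => by
      rw [substTrm, substTrm_eq_self t (FixesUpTo.skipMu (by simpa [lamBoundTrm] using h) α)]
  | .prc p, σ, h => by
      rw [substTrm, substPrc_eq_self p (by simpa [lamBoundTrm] using h)]
  | .prj v l, σ, h => by
      rw [substTrm, substVal_eq_self v (by simpa [lamBoundTrm] using h)]
  | .cse v bs, σ, h => by
      rw [substTrm, substVal_eq_self v (h.mono (by simp [lamBoundTrm])),
        substBrs_eq_self bs (h.mono (by simp [lamBoundTrm]))]
  | .dlt v w, σ, h => by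
      rw [substTrm, substVal_eq_self v (h.mono (by simp [lamBoundTrm])),
        substVal_eq_self w (h.mono (by simp [lamBoundTrm]))]
theorem substBrs_eq_self : ∀ (bs : Brs) {σ : Subst}, σ.FixesUpTo (lamBoundBrs bs) →
    substBrs σ bs = bs
  | .nil, σ, _ => rfl
  | .cons c x t bs, σ, h => by
      rw [substBrs, substTrm_eq_self t (FixesUpTo.skipLam (h.mono (by simp [lamBoundBrs]; omega))),
        substBrs_eq_self bs (h.mono (by simp [lamBoundBrs]))]
theorem substStk_eq_self : ∀ (π : Stk) {σ : Subst}, σ.FixesUpTo (lamBoundStk π) →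
    substStk σ π = π
  | .svar α, σ, h => by simp [substStk, h.1]
  | .push v π, σ, h => by
      rw [substStk, substVal_eq_self v (h.mono (by simp [lamBoundStk])),
        substStk_eq_self π (h.mono (by simp [lamBoundStk]))]
  | .frame t π, σ, h => by
      rw [substStk, substTrm_eq_self t (h.mono (by simp [lamBoundStk])),
        substStk_eq_self π (h.mono (by simp [lamBoundStk]))]
theorem substPrc_eq_self : ∀ (p : Proc) {σ : Subst}, σ.FixesUpTo (lamBoundPrc p) →
    substPrc σ p = p
  | .mk t π, σ, h => by
      rw [substPrc, substTrm_eq_self t (h.mono (by simp [lamBoundPrc])),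
        substStk_eq_self π (h.mono (by simp [lamBoundPrc]))]
end

theorem Red.deterministic {p q r : Proc} (hq : Red p q) (hr : Red p r) : q = r := by
  cases hq <;> cases hr <;> simp_all

theorem not_red_of_final {p q : Proc} (hp : Final p) : ¬ Red p q := by
  obtain ⟨v, α, rfl⟩ := hp
  rintro ⟨⟩

theorem not_red_dlt (v w : Val) (π : Stk) {q : Proc} : ¬ Red (.mk (.dlt v w) π) q := by
  rintro ⟨⟩

theorem redFull_of_red {p q : Proc} (h : Red p q) : RedFull p q :=
  ⟨0, by rw [RedI]; exact Or.inl h⟩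

theorem red_of_redI_of_red {i : ℕ} {p q r : Proc} (hq : RedI i p q) (hr : Red p r) : Red p q := by
  rw [RedI] at hq
  rcases hq with hq | ⟨v, w, π, rfl, -⟩
  · exact hq
  · exact absurd hr (not_red_dlt v w π)

/-- On processes that `(≻)`-reduce, `(↪)` is `(≻)`, which is deterministic. -/
theorem mem_pole_iff_of_red {p q : Proc} (h : Red p q) : p ∈ Pole ↔ q ∈ Pole := by
  refine ⟨fun ⟨f, hpf, hf⟩ => ?_, fun ⟨f, hqf, hf⟩ => ⟨f, .head (redFull_of_red h) hqf, hf⟩⟩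
  rcases hpf.cases_head with rfl | ⟨p', ⟨i, hp'⟩, hp'f⟩
  · exact absurd h (not_red_of_final hf)
  · rw [h.deterministic (red_of_redI_of_red hp' h)]
    exact ⟨f, hp'f, hf⟩

theorem val_svar_mem_pole (v : Val) (α : ℕ) : Proc.mk (.val v) (.svar α) ∈ Pole :=
  ⟨_, .refl, v, α, rfl⟩

theorem dlt_mem_pole_of_not_equiv {v w : Val} (h : ¬ Equiv (.val v) (.val w)) {π : Stk}
    (hv : Proc.mk (.val v) π ∈ Pole) : Proc.mk (.dlt v w) π ∈ Pole := by
  obtain ⟨i, hi⟩ := not_forall.mp h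
  obtain ⟨f, hvf, hf⟩ := hv
  refine ⟨f, .head ⟨i + 1, ?_⟩ hvf, hf⟩
  rw [RedI]
  exact Or.inr ⟨v, w, π, rfl, rfl, i, i.lt_succ_self, hi⟩

/-- `δ_{v,v}` never fires: `v ≢ⱼ v` fails for every `j`. -/
theorem dlt_self_not_mem_pole (v : Val) (π : Stk) : Proc.mk (.dlt v v) π ∉ Pole := by
  rintro ⟨f, hf, hfin⟩
  rcases hf.cases_head with rfl | ⟨q, ⟨i, hq⟩, -⟩
  · obtain ⟨_, _, h⟩ := hfin
    cases h
  · rw [RedI] at hq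
    rcases hq with hq | ⟨_, _, _, h, -, j, -, hne⟩
    · exact not_red_dlt v v π hq
    · obtain ⟨rfl, rfl⟩ := Trm.dlt.inj (Proc.mk.inj h).1
      exact hne fun _ _ _ _ => Iff.rfl

def separatingStk (v : Val) : Stk :=
  .frame (.val (.lam (lamBoundVal v + 1) (.dlt (.var (lamBoundVal v + 1)) v))) (.svar 0)

theorem mem_pole_separatingStk_iff (v w : Val) :
    Proc.mk (.val w) (separatingStk v) ∈ Pole ↔ Proc.mk (.dlt w v) (.svar 0) ∈ Pole := by
  have hsubst : substTrm (subst1Lam (lamBoundVal v + 1) w) (.dlt (.var (lamBoundVal v + 1)) v)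
      = .dlt w v := by
    rw [substTrm, substVal_eq_self v (subst1Lam_fixesUpTo (Nat.lt_succ_self _) w)]
    simp [substVal, subst1Lam]
  rw [separatingStk, mem_pole_iff_of_red (.frame _ _ _), mem_pole_iff_of_red (.beta _ _ _ _),
    hsubst]

theorem separatingStk_mem_orth {Φ : Set Val} {v : Val}
    (hΦ : ∀ w ∈ Φ, ¬ Equiv (.val w) (.val v)) : separatingStk v ∈ orth Φ := fun w hw =>
  (mem_pole_separatingStk_iff v w).2 (dlt_mem_pole_of_not_equiv (hΦ w hw) (val_svar_mem_pole w 0))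

/-- Theorem 4: the biorthogonal introduces no new values:
    if Φ is closed under (≡) then Φ^⊥⊥ ∩ Λ_v = Φ. -/
theorem biorth_no_new_values (Φ : Set Val)
    (hcl : ∀ v ∈ Φ, ∀ w : Val, Equiv (.val v) (.val w) → w ∈ Φ) :
    {v : Val | Trm.val v ∈ biorth Φ} = Φ := by
  refine Set.Subset.antisymm (fun v hv => ?_) fun v hv π hπ => hπ v hv
  by_contra hvΦ
  have hsep : separatingStk v ∈ orth Φ :=
    separatingStk_mem_orth fun w hw hwv => hvΦ (hcl w hw v hwv)
  exact dlt_self_not_mem_pole v _ ((mem_pole_separatingStk_iff v v).1 (hv _ hsep))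

end CBV
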